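/- arXiv:1908.00860 — 8 statements merged into one kernel-verified Lean document; each statement's English description precedes it below -/
import Mathlib

section
/- Let V be a finite set of variables equipped with a linear order, let D be a linearly ordered domain, and let f be a predicate on assignments a : V → D. Let θ be a permutation of V that is a symmetry of f, i.e., f(a ∘ θ) holds if and only if f(a) holds for every assignment a. Define the symmetry breaking predicate SBP(θ)(a) := for every i ∈ V, if a(j) = a(θ(j)) for all j < i, then a(i) ≤ a(θ(i)). Then f is satisfiable (some assignment a satisfies f) if and only if the conjunction of f and SBP(θ) is satisfiable. -/
/-- The symmetry breaking predicate for a permutation `θ` of the variables: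
for every variable `i`, if the assignment agrees with its `θ`-image on all
smaller variables, then `a i ≤ a (θ i)`. -/
def SBP {V D : Type*} [LinearOrder V] [LinearOrder D]
    (θ : Equiv.Perm V) (a : V → D) : Prop :=
  ∀ i : V, (∀ j < i, a j = a (θ j)) → a i ≤ a (θ i)

lemma sbp_of_lex_le {V D : Type*} [Fintype V] [LinearOrder V] [LinearOrder D]
    (θ : Equiv.Perm V) (c : V → D)
    (h : toLex c ≤ toLex (fun x => c (θ x))) : SBP θ c := by
  rcases h.lt_or_eq with h | h
  · obtain ⟨i0, hlow, hi0⟩ := h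
    intro i hi
    rcases lt_trichotomy i i0 with hlt | rfl | hgt
    · exact (hlow i hlt).le
    · exact hi0.le
    · exact absurd (hi i0 hgt) (ne_of_lt hi0)
  · intro i _
    exact (congrFun (toLex_inj.mp h) i).le

/-- **Theorem 1.** If `θ` is a symmetry of the predicate `f` on assignments
`a : V → D` (with `V` finite and linearly ordered, `D` linearly ordered), then
`f` is satisfiable iff `f ∧ SBP θ` is satisfiable. -/
theorem sbp_equisatisfiable {V D : Type*} [Fintype V] [LinearOrder V] [LinearOrder D]
    (f : (V → D) → Prop) (θ : Equiv.Perm V)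
    (hsym : ∀ a : V → D, f (fun x => a (θ x)) ↔ f a) :
    (∃ a : V → D, f a) ↔ (∃ a : V → D, f a ∧ SBP θ a) := by
  constructor
  · rintro ⟨a, ha⟩
    set n := orderOf θ with hn
    have hnpos : 0 < n := orderOf_pos θ
    set g : ℕ → (V → D) := fun k => fun x => a ((θ ^ k) x) with hg
    have hstep : ∀ k, (fun x => g k (θ x)) = g (k + 1) := by
      intro k
      funext x
      simp [hg, pow_succ]
    have hf : ∀ k, f (g k) := by
      intro k
      induction k with
      | zero => simpa [hg] using ha
      | succ k ih => rw [← hstep k]; exact (hsym (g k)).mpr ih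
    set S : Finset (Lex (V → D)) :=
      (Finset.range n).image (fun k => toLex (g k)) with hS
    have hSne : S.Nonempty := ⟨toLex (g 0), Finset.mem_image.mpr ⟨0, Finset.mem_range.mpr hnpos, rfl⟩⟩
    obtain ⟨b, hbS, hbmin⟩ := S.exists_min_image id hSne
    obtain ⟨k, hk, hbk⟩ := Finset.mem_image.mp hbS
    have hmem : toLex (g ((k + 1) % n)) ∈ S :=
      Finset.mem_image.mpr ⟨(k + 1) % n, Finset.mem_range.mpr (Nat.mod_lt _ hnpos), rfl⟩
    have hgm : g ((k + 1) % n) = g (k + 1) := by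
      funext x
      simp only [hg]
      rw [hn, pow_mod_orderOf]
    have hle : toLex (g k) ≤ toLex (fun x => g k (θ x)) := by
      rw [hstep k, ← hgm]
      have := hbmin _ hmem
      rw [← hbk] at this
      exact this
    exact ⟨g k, hf k, sbp_of_lex_le θ (g k) hle⟩
  · rintro ⟨a, ha, _⟩
    exact ⟨a, ha⟩
end

section
/- Let V be a finite set of Boolean variables equipped with a linear order, and let f be a predicate on Boolean assignments a : V → Bool (with false < true). Let θ be a permutation of V that is a symmetry of f, i.e., f(a ∘ θ) ↔ f(a) for every assignment a. Define SBP(θ)(a) := for every i ∈ V, if a(j) = a(θ(j)) for all j < i, then a(i) = true implies a(θ(i)) = true. Then f is satisfiable if and only if the conjunction of f and SBP(θ) is satisfiable. -/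
/-- The Boolean symmetry breaking predicate for a permutation `θ` of the
variables: for every variable `i`, if the assignment agrees with its `θ`-image
on all smaller variables, then `a i = true` implies `a (θ i) = true`. -/
def SBPBool {V : Type*} [LinearOrder V] (θ : Equiv.Perm V) (a : V → Bool) : Prop :=
  ∀ i : V, (∀ j < i, a j = a (θ j)) → (a i = true → a (θ i) = true)

/-- The strict lexicographic order on assignments. -/
private def lexLT {V : Type*} [LinearOrder V] (a b : V → Bool) : Prop :=
  ∃ i, (∀ j < i, a j = b j) ∧ a i < b i

private theorem lexLT_trans {V : Type*} [LinearOrder V] {a b c : V → Bool}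
    (hab : lexLT a b) (hbc : lexLT b c) : lexLT a c := by
  obtain ⟨i, hi, hlt⟩ := hab
  obtain ⟨k, hk, hlt'⟩ := hbc
  rcases lt_trichotomy i k with h | h | h
  · exact ⟨i, fun j hj => (hi j hj).trans (hk j (hj.trans h)), hlt.trans_eq (hk i h)⟩
  · subst h; exact ⟨i, fun j hj => (hi j hj).trans (hk j hj), hlt.trans hlt'⟩
  · exact ⟨k, fun j hj => (hi j (hj.trans h)).trans (hk j hj), (hi k h).trans_lt hlt'⟩

private theorem lexLT_irrefl {V : Type*} [LinearOrder V] (a : V → Bool) : ¬ lexLT a a := by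
  rintro ⟨i, _, hlt⟩; exact lt_irrefl _ hlt

/-- Boolean (SAT) soundness of symmetry breaking predicates: if `θ` is a
symmetry of the predicate `f` on Boolean assignments `a : V → Bool` (with `V`
finite and linearly ordered), then `f` is satisfiable iff `f ∧ SBP θ` is
satisfiable. -/
theorem sbp_bool_equisatisfiable {V : Type*} [Fintype V] [LinearOrder V]
    (f : (V → Bool) → Prop) (θ : Equiv.Perm V)
    (hsym : ∀ a : V → Bool, f (fun x => a (θ x)) ↔ f a) :
    (∃ a : V → Bool, f a) ↔ (∃ a : V → Bool, f a ∧ SBPBool θ a) := by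
  constructor
  · rintro ⟨a₀, ha₀⟩
    haveI : IsTrans (V → Bool) lexLT := ⟨fun _ _ _ => lexLT_trans⟩
    haveI : IsIrrefl (V → Bool) lexLT := ⟨lexLT_irrefl⟩
    have hwf : WellFounded (lexLT (V := V)) :=
      Finite.wellFounded_of_trans_of_irrefl _
    obtain ⟨a, ha, hmin⟩ := hwf.has_min {x | f x} ⟨a₀, ha₀⟩
    refine ⟨a, ha, fun i hagree hai => ?_⟩
    by_contra hfalse
    have hbf : f (fun x => a (θ x)) := (hsym a).mpr ha
    refine hmin _ hbf ⟨i, fun j hj => (hagree j hj).symm, ?_⟩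
    simp only [Bool.not_eq_true] at hfalse
    show a (θ i) < a i
    rw [hfalse, hai]
    exact Bool.false_lt_true
  · rintro ⟨a, ha, _⟩; exact ⟨a, ha⟩
end

section
/- Let V be a finite linearly ordered set, D a linearly ordered domain, and G a subgroup of the permutation group of V. If an assignment a : V → D is lexicographically minimal in its orbit {a ∘ θ : θ ∈ G}, then for every θ ∈ G the assignment a satisfies the symmetry breaking predicate SBP(θ), i.e., for every i ∈ V, if a(j) = a(θ(j)) for all j < i then a(i) ≤ a(θ(i)). -/
/-- The lexicographic order on assignments: `a ≤lex b` iff `a = b`, or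
`a i < b i` at the least index `i` where `a` and `b` differ. -/
def lexLe {V D : Type*} [LinearOrder V] [LinearOrder D] (a b : V → D) : Prop :=
  a = b ∨ ∃ i : V, a i < b i ∧ ∀ j < i, a j = b j

/-- If an assignment `a` is lexicographically minimal in its orbit
`{a ∘ θ : θ ∈ G}` under a subgroup `G` of permutations of `V`, then `a`
satisfies the symmetry breaking predicate `SBP θ` for every `θ ∈ G`. -/
theorem lex_min_satisfies_sbp {V D : Type*} [Fintype V] [LinearOrder V] [LinearOrder D]
    (G : Subgroup (Equiv.Perm V)) (a : V → D)
    (hmin : ∀ b ∈ {b : V → D | ∃ θ ∈ G, b = fun x => a (θ x)}, lexLe a b) :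
    ∀ θ ∈ G, SBP θ a := by
  intro θ hθ i hi
  have h := hmin (fun x => a (θ x)) ⟨θ, hθ, rfl⟩
  rcases h with h | ⟨k, hk, hkj⟩
  · exact le_of_eq (congrFun h i)
  · rcases lt_trichotomy k i with hki | rfl | hik
    · exact absurd (hi k hki) (ne_of_lt hk)
    · exact le_of_lt hk
    · exact le_of_eq (hkj i hik)
end

section
/- Let V be a finite linearly ordered set, D a linearly ordered domain, and G a subgroup of the permutation group of V. An assignment a : V → D satisfies the symmetry breaking predicate SBP(θ) for every θ ∈ G if and only if a is lexicographically minimal in its orbit {a ∘ θ : θ ∈ G}. -/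
/-- An assignment `a` satisfies `SBP θ` for every `θ` in a subgroup `G` of
permutations of `V` iff `a` is lexicographically minimal in its orbit
`{a ∘ θ : θ ∈ G}`. -/
theorem sbp_forall_iff_lex_min {V D : Type*} [Fintype V] [LinearOrder V] [LinearOrder D]
    (G : Subgroup (Equiv.Perm V)) (a : V → D) :
    (∀ θ ∈ G, SBP θ a) ↔
      ∀ b ∈ {b : V → D | ∃ θ ∈ G, b = fun x => a (θ x)}, lexLe a b := by
  constructor
  · rintro h b ⟨θ, hθ, rfl⟩
    by_cases heq : a = fun x => a (θ x)
    · exact Or.inl heq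
    · have hne : {i : V | a i ≠ a (θ i)}.Nonempty := by
        by_contra hc
        push_neg at hc
        exact heq (funext fun x => by
          have := Set.eq_empty_iff_forall_notMem.mp hc x
          simpa using this)
      obtain ⟨i, hi, hmin⟩ := Set.exists_min_image _ id (Set.toFinite _) hne
      refine Or.inr ⟨i, ?_, ?_⟩
      · have hle : a i ≤ a (θ i) := h θ hθ i (fun j hj => by
          by_contra hjne
          exact absurd (hmin j hjne) (not_le.mpr hj))
        exact lt_of_le_of_ne hle hi
      · intro j hj
        by_contra hjne
        exact absurd (hmin j hjne) (not_le.mpr hj)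
  · intro h θ hθ i hbelow
    have := h (fun x => a (θ x)) ⟨θ, hθ, rfl⟩
    rcases this with heq | ⟨k, hk, hkmin⟩
    · exact le_of_eq (congrFun heq i)
    · rcases lt_trichotomy i k with hik | rfl | hki
      · exact le_of_eq (hkmin i hik)
      · exact le_of_lt hk
      · exact absurd (hbelow k hki) (ne_of_lt hk)
end

section
/- Let V be a finite linearly ordered set, D a linearly ordered domain, f a predicate on assignments a : V → D, and G a subgroup of the permutation group of V every element of which is a symmetry of f (i.e., f(a ∘ θ) ↔ f(a) for all assignments a and all θ ∈ G). If f is satisfiable, then there exists an assignment a satisfying f such that a satisfies SBP(θ) for every θ ∈ G. -/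
/-- If every element of a subgroup `G` of permutations of `V` is a symmetry of
`f`, and `f` is satisfiable, then some assignment satisfying `f` also satisfies
`SBP θ` for every `θ ∈ G`. -/
theorem exists_model_satisfying_all_sbp {V D : Type*}
    [Fintype V] [LinearOrder V] [LinearOrder D]
    (f : (V → D) → Prop) (G : Subgroup (Equiv.Perm V))
    (hsym : ∀ θ ∈ G, ∀ a : V → D, f (fun x => a (θ x)) ↔ f a)
    (hsat : ∃ a : V → D, f a) :
    ∃ a : V → D, f a ∧ ∀ θ ∈ G, SBP θ a := by
  obtain ⟨a0, ha0⟩ := hsat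
  set S : Set (Lex (V → D)) := Set.range (fun θ : G => toLex (fun x => a0 (θ.1 x))) with hS
  have hfin : S.Finite := Set.finite_range _
  have hne : S.Nonempty := ⟨_, ⟨1, rfl⟩⟩
  obtain ⟨b, hbS, hbmin⟩ := Set.exists_min_image S id hfin hne
  obtain ⟨θ0, hθ0⟩ := hbS
  refine ⟨ofLex b, ?_, ?_⟩
  · have := (hsym θ0.1 θ0.2 a0).2 ha0
    rw [← hθ0]; exact this
  · intro θ hθ i hpre
    have hmem : toLex (fun x => (ofLex b) (θ x)) ∈ S := by
      refine ⟨⟨θ0.1 * θ, mul_mem θ0.2 hθ⟩, ?_⟩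
      rw [← hθ0]
      rfl
    have hle : b ≤ toLex (fun x => (ofLex b) (θ x)) := hbmin _ hmem
    rcases eq_or_lt_of_le hle with heq | hlt
    · exact le_of_eq (congrFun (congrArg ofLex heq) i)
    · obtain ⟨k, hk1, hk2⟩ := hlt
      rcases lt_trichotomy i k with h | h | h
      · exact le_of_eq (by simpa using hk1 i h)
      · subst h; exact le_of_lt hk2
      · exact absurd (hpre k h) (ne_of_lt hk2)
end

section
/- Let V be a finite linearly ordered set, D a linearly ordered domain, f a predicate on assignments a : V → D, and θ₁, …, θₙ permutations of V each of which is a symmetry of f (i.e., f(a ∘ θᵢ) ↔ f(a) for all assignments a and all i). Then f is satisfiable if and only if the conjunction of f with SBP(θ₁), …, SBP(θₙ) is satisfiable, where SBP(θ)(a) means: for every i ∈ V, if a(j) = a(θ(j)) for all j < i then a(i) ≤ a(θ(i)). -/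
/-- If `θ 1, …, θ n` are permutations of `V` each of which is a symmetry of
`f`, then `f` is satisfiable iff the conjunction of `f` with
`SBP (θ 1), …, SBP (θ n)` is satisfiable. -/
theorem sbp_finite_family_equisatisfiable {V D : Type*}
    [Fintype V] [LinearOrder V] [LinearOrder D]
    (f : (V → D) → Prop) (n : ℕ) (θ : Fin n → Equiv.Perm V)
    (hsym : ∀ i : Fin n, ∀ a : V → D, f (fun x => a (θ i x)) ↔ f a) :
    (∃ a : V → D, f a) ↔ (∃ a : V → D, f a ∧ ∀ i : Fin n, SBP (θ i) a) := by
  constructor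
  · rintro ⟨a, ha⟩
    classical
    let T : Finset (V → D) :=
      (Finset.univ.image (fun σ : Equiv.Perm V => a ∘ σ)).filter f
    have hT : T.Nonempty := ⟨a, by
      simp only [T, Finset.mem_filter, Finset.mem_image]
      exact ⟨⟨1, Finset.mem_univ _, by ext x; simp⟩, ha⟩⟩
    obtain ⟨b, hbT, hbmin⟩ := T.exists_min_image (fun c => toLex c) hT
    obtain ⟨hbimg, hbf⟩ := Finset.mem_filter.mp hbT
    obtain ⟨σ, -, hσ⟩ := Finset.mem_image.mp hbimg
    refine ⟨b, hbf, fun i => ?_⟩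
    by_contra h
    simp only [SBP, not_forall, not_le] at h
    obtain ⟨k, hk1, hk2⟩ := h
    have hmem : (b ∘ ⇑(θ i)) ∈ T := by
      refine Finset.mem_filter.mpr ⟨?_, ?_⟩
      · refine Finset.mem_image.mpr ⟨σ * θ i, Finset.mem_univ _, ?_⟩
        rw [← hσ]; rfl
      · exact (hsym i b).mpr hbf
    have hlt : toLex (b ∘ ⇑(θ i)) < toLex b := by
      refine ⟨k, fun j hj => (hk1 j hj).symm, hk2⟩
    exact absurd (hbmin _ hmem) (not_le.mpr hlt)
  · rintro ⟨a, ha, -⟩; exact ⟨a, ha⟩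
end

section
/- Let V be a finite linearly ordered set, D a linearly ordered domain, f a predicate on assignments a : V → D, θ a symmetry of f (i.e., f(a ∘ θ) ↔ f(a) for all a), and S ⊆ V a downward-closed subset of V (if i ∈ S and j < i then j ∈ S). Define the restricted symmetry breaking predicate rSBP(θ, S)(a) := for every i ∈ S, if a(j) = a(θ(j)) for all j < i, then a(i) ≤ a(θ(i)). Then for every assignment a, SBP(θ)(a) implies rSBP(θ, S)(a), and consequently f is satisfiable if and only if the conjunction of f and rSBP(θ, S) is satisfiable. -/
/-- The restricted symmetry breaking predicate: the ordering constraints are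
imposed only over the variables in the subset `S`. -/
def rSBP {V D : Type*} [LinearOrder V] [LinearOrder D]
    (θ : Equiv.Perm V) (S : Set V) (a : V → D) : Prop :=
  ∀ i ∈ S, (∀ j < i, a j = a (θ j)) → a i ≤ a (θ i)

/-- Soundness of restricted SBPs (Definition 2 of the paper): for a symmetry
`θ` of `f` and a downward-closed subset `S` of `V`, every assignment satisfying
`SBP θ` satisfies `rSBP θ S`, and consequently `f` is satisfiable iff
`f ∧ rSBP θ S` is satisfiable. -/
theorem restricted_sbp_sound {V D : Type*} [Fintype V] [LinearOrder V] [LinearOrder D]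
    (f : (V → D) → Prop) (θ : Equiv.Perm V) (S : Set V)
    (hsym : ∀ a : V → D, f (fun x => a (θ x)) ↔ f a)
    (hdc : ∀ i ∈ S, ∀ j < i, j ∈ S) :
    (∀ a : V → D, SBP θ a → rSBP θ S a) ∧
    ((∃ a : V → D, f a) ↔ (∃ a : V → D, f a ∧ rSBP θ S a)) := by
  have hSBPr : ∀ a : V → D, SBP θ a → rSBP θ S a := fun a h i _ hagr => h i hagr
  refine ⟨hSBPr, ?_, fun ⟨a, ha, _⟩ => ⟨a, ha⟩⟩
  rintro ⟨a, ha⟩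
  -- f is preserved by powers of θ
  have hpow : ∀ k : ℕ, f (fun x => a ((θ ^ k) x)) := by
    intro k
    induction k with
    | zero => simpa using ha
    | succ k ih =>
      have := (hsym (fun x => a ((θ ^ k) x))).mpr ih
      have heq : (fun x => (fun y => a ((θ ^ k) y)) (θ x)) =
          (fun x => a ((θ ^ (k + 1)) x)) := by
        funext x
        simp [pow_succ, Equiv.Perm.mul_apply]
      rwa [heq] at this
  -- consider the finite orbit of a under θ, in lex order
  classical
  let n := orderOf θ
  have hn : 0 < n := orderOf_pos θ
  let T : Finset (Lex (V → D)) :=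
    (Finset.range n).image (fun k => toLex (fun x => a ((θ ^ k) x)))
  have hT : T.Nonempty := ⟨_, Finset.mem_image.mpr ⟨0, Finset.mem_range.mpr hn, rfl⟩⟩
  obtain ⟨b, hbT, hbmin⟩ := T.exists_min_image id hT
  obtain ⟨k, hk, hbk⟩ := Finset.mem_image.mp hbT
  set c : V → D := ofLex b with hc
  have hcdef : c = fun x => a ((θ ^ k) x) := by
    rw [hc, ← hbk]; rfl
  -- c ∘ θ is also in the orbit
  have hcθ : toLex (fun x => c (θ x)) ∈ T := by
    rcases eq_or_lt_of_le (Nat.succ_le_of_lt (Finset.mem_range.mp hk)) with h | h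
    · refine Finset.mem_image.mpr ⟨0, Finset.mem_range.mpr hn, ?_⟩
      congr 1
      funext x
      have hkn : k + 1 = n := h
      have : θ ^ (k + 1) = 1 := by rw [hkn]; exact pow_orderOf_eq_one θ
      have h1 : (θ ^ (k+1)) x = x := by rw [this]; rfl
      rw [hcdef]
      simp only [pow_succ, Equiv.Perm.mul_apply] at h1 ⊢
      simp [h1]
    · refine Finset.mem_image.mpr ⟨k + 1, Finset.mem_range.mpr h, ?_⟩
      congr 1
      funext x
      rw [hcdef]
      simp [pow_succ, Equiv.Perm.mul_apply]
  have hfc : f c := by rw [hcdef]; exact hpow k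
  have hSBP : SBP θ c := by
    intro i hagr
    by_contra hlt
    push_neg at hlt
    have hlex : toLex (fun x => c (θ x)) < b := by
      refine ⟨i, fun j hj => (hagr j hj).symm, ?_⟩
      exact hlt
    exact absurd (hbmin _ hcθ) (not_le.mpr hlex)
  exact ⟨c, hfc, hSBPr c hSBP⟩
end

section
/- Let Vb be a finite linearly ordered set, Vt a set, D a domain, and F a predicate on pairs (a, u) with a : Vb → Bool and u : Vt → D. Let G be a subgroup of the product of the permutation groups of Vb and Vt such that every (σ, τ) ∈ G satisfies F(a ∘ σ, u ∘ τ) ↔ F(a, u) for all a, u. If some pair (a, u) satisfies F, then there exists a pair (a', u') satisfying F such that a' ≤lex a' ∘ σ for every (σ, τ) ∈ G, where ≤lex is the lexicographic order on Boolean assignments induced by the order on Vb and false < true. -/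
/-- The lexicographic order on Boolean assignments induced by the order on the
variables and `false < true`: `a ≤lex b` iff `a = b`, or `a i < b i` at the
least index `i` where `a` and `b` differ. -/
def lexLeBool {Vb : Type*} [LinearOrder Vb] (a b : Vb → Bool) : Prop :=
  a = b ∨ ∃ i : Vb, a i < b i ∧ ∀ j < i, a j = b j

lemma lexLeBool_iff_toLex_le {Vb : Type*} [Fintype Vb] [LinearOrder Vb] (a b : Vb → Bool) :
    lexLeBool a b ↔ toLex a ≤ toLex b := by
  rw [le_iff_lt_or_eq]
  constructor
  · rintro (rfl | ⟨i, hi, hj⟩)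
    · exact Or.inr rfl
    · exact Or.inl ⟨i, fun j hji => hj j hji, hi⟩
  · rintro (⟨i, hj, hi⟩ | h)
    · exact Or.inr ⟨i, hi, fun j hji => hj j hji⟩
    · exact Or.inl (toLex_inj.mp h)

/-- If `G` is a subgroup of the product of the permutation groups of `Vb` and
`Vt` consisting of Boolean-skeleton-cum-theory symmetries of `F`, then any
model `(a, u)` of `F` can be replaced by a model `(a', u')` whose Boolean part
`a'` is a lex-leader: `a' ≤lex a' ∘ σ` for every `(σ, τ) ∈ G`. -/
theorem exists_lex_leader_model {Vb Vt D : Type*} [Fintype Vb] [LinearOrder Vb]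
    (F : (Vb → Bool) → (Vt → D) → Prop)
    (G : Subgroup (Equiv.Perm Vb × Equiv.Perm Vt))
    (hsym : ∀ p ∈ G, ∀ (a : Vb → Bool) (u : Vt → D),
      F (fun x => a (p.1 x)) (fun y => u (p.2 y)) ↔ F a u)
    (hsat : ∃ (a : Vb → Bool) (u : Vt → D), F a u) :
    ∃ (a' : Vb → Bool) (u' : Vt → D), F a' u' ∧
      ∀ p ∈ G, lexLeBool a' (fun x => a' (p.1 x)) := by
  obtain ⟨a, u, hF⟩ := hsat
  -- The orbit of `a` under the Boolean parts of `G`.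
  classical
  let S : Set (Lex (Vb → Bool)) := {b | ∃ p ∈ G, b = toLex (fun x => a (p.1 x))}
  have hSne : S.Nonempty := ⟨toLex a, 1, G.one_mem, rfl⟩
  have hSfin : S.Finite := Set.toFinite S
  obtain ⟨b, hbS, hbmin⟩ := Set.exists_min_image S id hSfin hSne
  obtain ⟨p₀, hp₀, hb⟩ := hbS
  refine ⟨fun x => a (p₀.1 x), fun y => u (p₀.2 y), (hsym p₀ hp₀ a u).mpr hF, ?_⟩
  intro p hp
  rw [lexLeBool_iff_toLex_le]
  have hmem : toLex (fun x => (fun x => a (p₀.1 x)) (p.1 x)) ∈ S :=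
    ⟨p₀ * p, G.mul_mem hp₀ hp, rfl⟩
  exact hb ▸ hbmin _ hmem
end
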